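/- arXiv:2004.11166 — 2 statements merged into one kernel-verified Lean document; each statement's English description precedes it below -/
import Mathlib

section
/- Let P be a GMMN instance whose intersection graph IG[P] is connected, has maximum degree at most Δ, and is neither a complete graph nor an odd cycle, and let N* ∈ Opt(P) be an optimal solution for P. Then every feasible solution N ∈ Feas(P) satisfies ‖N‖ ≤ Δ·‖N*‖. (Corollary B.2.) -/
/-! Any feasible network has length at most `∑ v, d(v)`, which is also the total length of the
M-paths `f v` forming `N*`; this sum counts each edge `e` of `N*` once for every pair whose path
uses `e`. The endpoints of an edge of an M-path lie in the bounding box of its pair, so pairs whose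
paths share an edge are pairwise adjacent in `IG[P]`. In a connected, non-complete graph of maximum
degree `Δ`, a clique has at most `Δ` vertices: a clique on `Δ + 1` vertices would contain the whole
neighbourhood of each of its vertices, hence, by connectivity, every vertex. -/

noncomputable section
open scoped Classical

/-- A point in the Euclidean plane. -/
abbrev Point : Type := ℝ × ℝ

/-- The Manhattan distance `d(p, q)`. -/
def manh (p q : Point) : ℝ := |p.1 - q.1| + |p.2 - q.2|

/-- The Euclidean length `‖pq‖` of the segment between `p` and `q`. -/
def euclen (p q : Point) : ℝ := Real.sqrt ((p.1 - q.1) ^ 2 + (p.2 - q.2) ^ 2)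

/-- The segment `pq` is axis-aligned. -/
def axisAligned (p q : Point) : Prop := p.1 = q.1 ∨ p.2 = q.2

/-- `z` lies in the bounding box `B(a, b)` (componentwise between `a ⊓ b` and `a ⊔ b`). -/
def inBox (a b z : Point) : Prop := a ⊓ b ≤ z ∧ z ≤ a ⊔ b

lemma euclen_comm (p q : Point) : euclen p q = euclen q p := by
  unfold euclen; ring_nf

/-- Length of an (unordered) edge. -/
def sym2Len : Sym2 Point → ℝ := Sym2.lift ⟨euclen, euclen_comm⟩

/-- The length of a network, given by its (finite) edge set. -/
def netLength (N : Finset (Sym2 Point)) : ℝ := ∑ e ∈ N, sym2Len e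

/-- A (simple) path in the plane, given by its sequence of (distinct) vertices. -/
structure GPath where
  k : ℕ
  pts : Fin (k + 1) → Point
  inj : Function.Injective pts

/-- The `i`-th edge of a path. -/
def GPath.edge (π : GPath) (i : Fin π.k) : Sym2 Point :=
  s(π.pts i.castSucc, π.pts i.succ)

/-- The edge set of a path. -/
def GPath.edges (π : GPath) : Finset (Sym2 Point) :=
  Finset.image π.edge Finset.univ

/-- The total (Euclidean) length of a path. -/
def GPath.length (π : GPath) : ℝ :=
  ∑ i : Fin π.k, euclen (π.pts i.castSucc) (π.pts i.succ)

/-- `π` is a Manhattan path (M-path) for the pair `(s, t)`: an `s`–`t` path all of whose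
edges are axis-aligned and whose total length equals the Manhattan distance `d(s, t)`. -/
def IsMPath (s t : Point) (π : GPath) : Prop :=
  π.pts 0 = s ∧ π.pts (Fin.last π.k) = t ∧
  (∀ i : Fin π.k, axisAligned (π.pts i.castSucc) (π.pts i.succ)) ∧
  π.length = manh s t

/-- A GMMN instance: a finite set of pairs of points. -/
abbrev Inst : Type := Finset (Point × Point)

/-- The vertex set of the Hanan grid `H(P)`. -/
def hananV (P : Inst) : Finset Point :=
  ((P.image fun v => v.1.1) ∪ (P.image fun v => v.2.1)) ×ˢ
  ((P.image fun v => v.1.2) ∪ (P.image fun v => v.2.2))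

/-- `{p, q}` is an edge of the Hanan grid `H(P)`: an axis-aligned segment between two distinct
grid vertices containing no third grid vertex. -/
def IsHananEdge (P : Inst) (p q : Point) : Prop :=
  p ∈ hananV P ∧ q ∈ hananV P ∧ p ≠ q ∧ axisAligned p q ∧
  ∀ z ∈ hananV P, inBox p q z → z = p ∨ z = q

/-- All edges of the path `π` are edges of the Hanan grid `H(P)`. -/
def OnGrid (P : Inst) (π : GPath) : Prop :=
  ∀ i : Fin π.k, IsHananEdge P (π.pts i.castSucc) (π.pts i.succ)

/-- `π ∈ Π_P(u)`: an M-path for the pair `u` that is a subgraph of the Hanan grid `H(P)`. -/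
def InPi (P : Inst) (u : Point × Point) (π : GPath) : Prop :=
  IsMPath u.1 u.2 π ∧ OnGrid P π

/-- The network `∪_{v ∈ P} π_v` determined by a choice of M-paths. -/
def netOf (P : Inst) (f : Point × Point → GPath) : Finset (Sym2 Point) :=
  P.biUnion fun v => (f v).edges

/-- `f` gives a feasible solution in `Feas(P)`: an M-path on the Hanan grid for each pair. -/
def IsFeasChoice (P : Inst) (f : Point × Point → GPath) : Prop :=
  ∀ v ∈ P, InPi P v (f v)

/-- `f` gives an optimal solution in `Opt(P)`. -/
def IsOptChoice (P : Inst) (f : Point × Point → GPath) : Prop :=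
  IsFeasChoice P f ∧
  ∀ g : Point × Point → GPath, IsFeasChoice P g →
    netLength (netOf P f) ≤ netLength (netOf P g)

/-- Adjacency in the intersection graph `IG[P]`: `u ≠ v` and the induced subgrids
`H(P, u)` and `H(P, v)` share an edge. -/
def IGAdj (P : Inst) (u v : Point × Point) : Prop :=
  u ≠ v ∧ ∃ p q : Point, IsHananEdge P p q ∧
    inBox u.1 u.2 p ∧ inBox u.1 u.2 q ∧ inBox v.1 v.2 p ∧ inBox v.1 v.2 q

/-- The total length `‖π₁ ∩ π₂‖` of the segments shared by two paths. -/
def sharedLen (π₁ π₂ : GPath) : ℝ := netLength (π₁.edges ∩ π₂.edges)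

/-- A pair `(p, q)` with `p_x ≤ q_x` is regular if `p_y ≤ q_y`. -/
def Regular (u : Point × Point) : Prop := u.1.1 ≤ u.2.1 ∧ u.1.2 ≤ u.2.2

/-- A pair `(p, q)` with `p_x ≤ q_x` is flipped if `p_y ≥ q_y`. -/
def Flipped (u : Point × Point) : Prop := u.1.1 ≤ u.2.1 ∧ u.2.2 ≤ u.1.2

/-- The intersection graph `IG[P]` as a simple graph on the pairs of `P`. -/
def IG (P : Inst) : SimpleGraph {v : Point × Point // v ∈ P} where
  Adj u v := IGAdj P u.1 v.1
  symm := ⟨by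
    rintro u v ⟨hne, p, q, he, h1, h2, h3, h4⟩
    exact ⟨hne.symm, p, q, he, h3, h4, h1, h2⟩⟩
  loopless := ⟨fun u h => h.1 rfl⟩

open Finset

lemma sym2Len_nonneg (e : Sym2 Point) : 0 ≤ sym2Len e := by
  induction e using Sym2.ind with
  | _ p q => exact Real.sqrt_nonneg _

lemma euclen_eq_of_axisAligned {p q : Point} (h : axisAligned p q) :
    euclen p q = dist p.1 q.1 + dist p.2 q.2 := by
  rcases h with h | h <;> simp [euclen, h, Real.dist_eq, Real.sqrt_sq_eq_abs]

lemma manh_eq_dist_add_dist (p q : Point) : manh p q = dist p.1 q.1 + dist p.2 q.2 := by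
  simp only [manh, Real.dist_eq]

lemma inBox_iff {a b z : Point} :
    inBox a b z ↔ z.1 ∈ Set.uIcc a.1 b.1 ∧ z.2 ∈ Set.uIcc a.2 b.2 := by
  simp only [inBox, Prod.le_def, Set.uIcc, Set.mem_Icc, Prod.fst_inf, Prod.snd_inf,
    Prod.fst_sup, Prod.snd_sup]
  tauto

section DoubleCounting

variable {ι : Type*} (s : Finset ι) (E : ι → Finset (Sym2 Point))

lemma sum_netLength_eq_sum_card_mul :
    ∑ i ∈ s, netLength (E i) = ∑ e ∈ s.biUnion E, (#{i ∈ s | e ∈ E i} : ℝ) * sym2Len e := by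
  simp only [netLength]
  rw [sum_comm' (t' := s.biUnion E) (s' := fun e => {i ∈ s | e ∈ E i})]
  · simp only [sum_const, nsmul_eq_mul]
  · intro i e
    simp only [mem_filter, mem_biUnion]
    exact ⟨fun h => ⟨h, i, h⟩, fun h => h.1⟩

lemma netLength_biUnion_le : netLength (s.biUnion E) ≤ ∑ i ∈ s, netLength (E i) := by
  rw [sum_netLength_eq_sum_card_mul, netLength]
  refine sum_le_sum fun e he => le_mul_of_one_le_left (sym2Len_nonneg e) ?_
  obtain ⟨i, hi, hei⟩ := mem_biUnion.1 he
  exact_mod_cast card_pos.2 ⟨i, mem_filter.2 ⟨hi, hei⟩⟩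

lemma sum_netLength_le_mul_netLength_biUnion {Δ : ℕ}
    (h : ∀ e ∈ s.biUnion E, #{i ∈ s | e ∈ E i} ≤ Δ) :
    ∑ i ∈ s, netLength (E i) ≤ Δ * netLength (s.biUnion E) := by
  rw [sum_netLength_eq_sum_card_mul, netLength, mul_sum]
  exact sum_le_sum fun e he =>
    mul_le_mul_of_nonneg_right (by exact_mod_cast h e he) (sym2Len_nonneg e)

end DoubleCounting

lemma dist_add_dist_eq_of_sum_dist_le {α : Type*} [PseudoMetricSpace α] {Z : ℕ → α} {j k : ℕ}
    (hjk : j ≤ k) (h : ∑ n ∈ range k, dist (Z n) (Z (n + 1)) ≤ dist (Z 0) (Z k)) :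
    dist (Z 0) (Z j) + dist (Z j) (Z k) = dist (Z 0) (Z k) := by
  refine le_antisymm ?_ (dist_triangle _ _ _)
  calc dist (Z 0) (Z j) + dist (Z j) (Z k)
      ≤ ∑ n ∈ range j, dist (Z n) (Z (n + 1)) + ∑ n ∈ Ico j k, dist (Z n) (Z (n + 1)) :=
        add_le_add (dist_le_range_sum_dist Z j) (dist_le_Ico_sum_dist Z hjk)
    _ = ∑ n ∈ range k, dist (Z n) (Z (n + 1)) := sum_range_add_sum_Ico _ hjk
    _ ≤ dist (Z 0) (Z k) := h

lemma mem_uIcc_of_sum_dist_le {Z : ℕ → ℝ} {j k : ℕ} (hjk : j ≤ k)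
    (h : ∑ n ∈ range k, dist (Z n) (Z (n + 1)) ≤ dist (Z 0) (Z k)) :
    Z j ∈ Set.uIcc (Z 0) (Z k) := by
  rw [← segment_eq_uIcc, mem_segment_iff_wbtw, ← dist_add_dist_eq_iff]
  exact dist_add_dist_eq_of_sum_dist_le hjk h

namespace GPath

variable (π : GPath)

lemma edge_injective : Function.Injective π.edge := by
  intro i j hij
  rcases Sym2.eq_iff.1 hij with ⟨h, -⟩ | ⟨h₁, h₂⟩
  · exact Fin.castSucc_injective _ (π.inj h)
  · have h₁ := congrArg Fin.val (π.inj h₁)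
    have h₂ := congrArg Fin.val (π.inj h₂)
    simp only [Fin.val_castSucc, Fin.val_succ] at h₁ h₂
    omega

lemma netLength_edges : netLength π.edges = π.length :=
  sum_image fun _ _ _ _ h => π.edge_injective h

/-- Indexing by `ℕ` gives access to the telescoping bounds such as `dist_le_Ico_sum_dist`. -/
def vertex (n : ℕ) : Point := π.pts (Fin.clamp n π.k)

lemma vertex_val (j : Fin (π.k + 1)) : π.vertex j = π.pts j := by
  simp [vertex, Fin.clamp, Nat.min_eq_left (Nat.lt_succ_iff.1 j.isLt)]

lemma sum_fin_eq_sum_range_vertex (φ : Point → Point → ℝ) :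
    ∑ i : Fin π.k, φ (π.pts i.castSucc) (π.pts i.succ) =
      ∑ n ∈ range π.k, φ (π.vertex n) (π.vertex (n + 1)) := by
  rw [← Fin.sum_univ_eq_sum_range (fun n => φ (π.vertex n) (π.vertex (n + 1)))]
  refine sum_congr rfl fun i _ => ?_
  rw [← vertex_val, ← vertex_val]
  rfl

end GPath

/-- On each axis the path's total movement equals its net displacement, so no coordinate
overshoots. -/
lemma IsMPath.mem_box {s t : Point} {π : GPath} (hm : IsMPath s t π) (j : Fin (π.k + 1)) :
    inBox s t (π.pts j) := by
  obtain ⟨hs, ht, hax, hlen⟩ := hm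
  set X : ℕ → ℝ := fun n => (π.vertex n).1
  set Y : ℕ → ℝ := fun n => (π.vertex n).2
  have hv₀ : π.vertex 0 = s := by rw [← hs]; exact π.vertex_val 0
  have hvₖ : π.vertex π.k = t := by rw [← ht]; exact π.vertex_val (Fin.last π.k)
  have hsum : ∑ n ∈ range π.k, dist (X n) (X (n + 1)) + ∑ n ∈ range π.k, dist (Y n) (Y (n + 1))
      = dist (X 0) (X π.k) + dist (Y 0) (Y π.k) := by
    rw [← sum_add_distrib, ← π.sum_fin_eq_sum_range_vertex (fun p q => dist p.1 q.1 + dist p.2 q.2),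
      ← sum_congr rfl fun i _ => euclen_eq_of_axisAligned (hax i)]
    simpa [X, Y, hv₀, hvₖ, manh_eq_dist_add_dist, GPath.length] using hlen
  have hXle := dist_le_range_sum_dist X π.k
  have hYle := dist_le_range_sum_dist Y π.k
  have hjk : (j : ℕ) ≤ π.k := Nat.lt_succ_iff.1 j.isLt
  rw [inBox_iff, ← π.vertex_val, ← hv₀, ← hvₖ]
  exact ⟨mem_uIcc_of_sum_dist_le (Z := X) hjk (by linarith),
    mem_uIcc_of_sum_dist_le (Z := Y) hjk (by linarith)⟩

lemma IsMPath.netLength_edges {s t : Point} {π : GPath} (hm : IsMPath s t π) :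
    netLength π.edges = manh s t :=
  π.netLength_edges.trans hm.2.2.2

lemma igAdj_of_mem_edges {P : Inst} {u v : Point × Point} {πu πv : GPath}
    (hu : InPi P u πu) (hv : InPi P v πv) (huv : u ≠ v) {e : Sym2 Point}
    (heu : e ∈ πu.edges) (hev : e ∈ πv.edges) : IGAdj P u v := by
  obtain ⟨i, -, rfl⟩ := mem_image.1 heu
  obtain ⟨i', -, hi'⟩ := mem_image.1 hev
  have hbox : ∀ x ∈ πu.edge i, inBox v.1 v.2 x := by
    rw [← hi']
    rintro x hx
    rcases Sym2.mem_iff.1 hx with rfl | rfl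
    exacts [hv.1.mem_box _, hv.1.mem_box _]
  exact ⟨huv, _, _, hu.2 i, hu.1.mem_box _, hu.1.mem_box _,
    hbox _ (Sym2.mem_mk_left _ _), hbox _ (Sym2.mem_mk_right _ _)⟩

lemma SimpleGraph.Connected.mem_of_adj_closed {V : Type*} {G : SimpleGraph V}
    (hG : G.Connected) {s : Set V} {v₀ : V} (hv₀ : v₀ ∈ s)
    (hs : ∀ a ∈ s, ∀ b, G.Adj a b → b ∈ s) (w : V) : w ∈ s := by
  obtain ⟨p⟩ := hG.preconnected v₀ w
  induction p with
  | nil => exact hv₀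
  | cons h _ ih => exact ih (hs _ hv₀ _ h)

lemma SimpleGraph.Connected.card_le_of_isClique {V : Type*} [Finite V] {G : SimpleGraph V}
    (hG : G.Connected) {Δ : ℕ} (hdeg : ∀ v, (G.neighborSet v).ncard ≤ Δ) (hG_top : G ≠ ⊤)
    {s : Finset V} (hs : G.IsClique (s : Set V)) : #s ≤ Δ := by
  by_contra! hΔ
  apply hG_top
  have hnbr : ∀ a ∈ s, ((s.erase a : Finset V) : Set V) = G.neighborSet a := fun a ha =>
    Set.eq_of_subset_of_ncard_le
      (fun b hb => hs ha (mem_erase.1 hb).2 (mem_erase.1 hb).1.symm)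
      (by rw [Set.ncard_coe_finset, card_erase_of_mem ha]; have := hdeg a; omega)
      (Set.toFinite _)
  obtain ⟨v₀, hv₀⟩ := card_pos.1 (by omega : 0 < #s)
  have hall : ∀ w, w ∈ s := hG.mem_of_adj_closed (s := ↑s) hv₀ fun a ha b hab => by
    have hb : b ∈ G.neighborSet a := hab
    rw [← hnbr a ha, mem_coe] at hb
    exact (mem_erase.1 hb).2
  ext a b
  exact ⟨fun h => h.ne, fun h => hs (hall a) (hall b) h⟩

lemma card_filter_mem_edges_le {P : Inst} {Δ : ℕ} (hconn : (IG P).Connected)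
    (hdeg : ∀ x : {v : Point × Point // v ∈ P}, ((IG P).neighborSet x).ncard ≤ Δ)
    (hIG : IG P ≠ ⊤) {f : Point × Point → GPath} (hf : IsFeasChoice P f) (e : Sym2 Point) :
    #{v ∈ P | e ∈ (f v).edges} ≤ Δ := by
  have hclique : (IG P).IsClique ({x | e ∈ (f x).edges} : Finset {v // v ∈ P}) := by
    intro x hx y hy hxy
    simp only [coe_filter, mem_univ, true_and, Set.mem_ofPred_eq] at hx hy
    exact igAdj_of_mem_edges (hf x x.2) (hf y y.2) (Subtype.coe_injective.ne hxy) hx hy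
  calc #{v ∈ P | e ∈ (f v).edges} = #({x | e ∈ (f x).edges} : Finset {v // v ∈ P}) := by
        have h := congrArg card (filter_attach (fun v => e ∈ (f v).edges) P)
        rw [card_map, card_attach] at h
        rw [univ_eq_attach]
        convert h.symm
    _ ≤ Δ := hconn.card_le_of_isClique hdeg hIG hclique

theorem degree_approximation_general (P : Inst) (Δ : ℕ)
    (hconn : (IG P).Connected)
    (hdeg : ∀ x : {v : Point × Point // v ∈ P}, ((IG P).neighborSet x).ncard ≤ Δ)
    (hnotcomplete : ¬ ∀ x y : {v : Point × Point // v ∈ P}, x ≠ y → (IG P).Adj x y)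
    (f g : Point × Point → GPath) (hf : IsOptChoice P f) (hg : IsFeasChoice P g) :
    netLength (netOf P g) ≤ (Δ : ℝ) * netLength (netOf P f) := by
  have hIG : IG P ≠ ⊤ := fun htop => hnotcomplete fun x y hxy => by rw [htop]; exact hxy
  calc netLength (netOf P g) ≤ ∑ v ∈ P, netLength (g v).edges := netLength_biUnion_le _ _
    _ = ∑ v ∈ P, netLength (f v).edges := sum_congr rfl fun v hv => by
        rw [(hg v hv).1.netLength_edges, (hf.1 v hv).1.netLength_edges]
    _ ≤ Δ * netLength (netOf P f) := sum_netLength_le_mul_netLength_biUnion _ _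
        fun e _ => card_filter_mem_edges_le hconn hdeg hIG hf.1 e

/-- Corollary B.2: if the intersection graph `IG[P]` is connected, has maximum degree at most
`Δ`, and is neither a complete graph nor an odd cycle, then every feasible solution has length
at most `Δ` times the length of an optimal solution. -/
theorem degree_approximation (P : Inst) (Δ : ℕ)
    (hconn : (IG P).Connected)
    (hdeg : ∀ x : {v : Point × Point // v ∈ P}, ((IG P).neighborSet x).ncard ≤ Δ)
    (hnotcomplete : ¬ ∀ x y : {v : Point × Point // v ∈ P}, x ≠ y → (IG P).Adj x y)
    (hnotoddcycle : ¬ ∃ n : ℕ, Odd n ∧ Nonempty ((IG P) ≃g SimpleGraph.cycleGraph n))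
    (f g : Point × Point → GPath) (hf : IsOptChoice P f) (hg : IsFeasChoice P g) :
    netLength (netOf P g) ≤ (Δ : ℝ) * netLength (netOf P f) :=
  degree_approximation_general P Δ hconn hdeg hnotcomplete f g hf hg

end
end

section
/- Let P be a GMMN instance, let r = (s,t) ∈ P be a regular pair, let π ∈ Π_P(r) be a Manhattan path for r on the Hanan grid, and let l be a pair such that π intersects the bounding box B(l). Then the intersection π ∩ H(P,l) is a subpath of π between two vertices p and q with p ≤ q, and this subpath is a Manhattan path for the (regular) pair (p,q). Moreover, (p,q) is called the in-out pair of π for l. -/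
noncomputable section
open scoped Classical

/-! An M-path for a regular pair `(s, t)` is monotone: the Manhattan lengths of its steps add up
to `d(s, t) = (t - s)_x + (t - s)_y`, while each step is at least as long as its increase of
`x + y`, so every step has nonnegative increments. The bounding box `B(l)` is an order interval,
so the indices of the vertices of a monotone path lying in it form an interval `[i, j]`; the
subpath from `π_i` to `π_j` is again monotone and axis-aligned, hence an M-path, and its edges
are exactly the edges of `π` inside `B(l)`. -/

lemma euclen_eq_manh_of_axisAligned {p q : Point} (h : axisAligned p q) :
    euclen p q = manh p q := by
  rcases h with h | h <;> simp [euclen, manh, h, Real.sqrt_sq_eq_abs]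

lemma sub_coord_sum_le_manh (p q : Point) : (q.1 + q.2) - (p.1 + p.2) ≤ manh p q := by
  unfold manh
  linarith [le_abs_self (p.1 - q.1), neg_abs_le (p.1 - q.1),
    le_abs_self (p.2 - q.2), neg_abs_le (p.2 - q.2)]

lemma manh_eq_sub_coord_sum_iff (p q : Point) :
    manh p q = (q.1 + q.2) - (p.1 + p.2) ↔ p ≤ q := by
  rw [Prod.le_def]
  unfold manh
  constructor
  · intro h
    constructor <;>
      linarith [le_abs_self (p.1 - q.1), neg_abs_le (p.1 - q.1),
        le_abs_self (p.2 - q.2), neg_abs_le (p.2 - q.2)]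
  · rintro ⟨h1, h2⟩
    rw [abs_sub_comm p.1, abs_of_nonneg (sub_nonneg.2 h1), abs_sub_comm p.2,
      abs_of_nonneg (sub_nonneg.2 h2)]
    ring

lemma Monotone.exists_forall_mem_iff_mem_Icc {ι α : Type*} [Fintype ι] [LinearOrder ι]
    [Preorder α] {f : ι → α} (hf : Monotone f) {s : Set α} (hs : s.OrdConnected)
    (hne : ∃ m, f m ∈ s) : ∃ i j, i ≤ j ∧ ∀ m, f m ∈ s ↔ i ≤ m ∧ m ≤ j := by
  classical
  set S := Finset.univ.filter fun m => f m ∈ s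
  have hS : S.Nonempty := let ⟨m, hm⟩ := hne; ⟨m, by simpa [S] using hm⟩
  have hmin : f (S.min' hS) ∈ s := by simpa [S] using S.min'_mem hS
  have hmax : f (S.max' hS) ∈ s := by simpa [S] using S.max'_mem hS
  refine ⟨S.min' hS, S.max' hS, S.min'_le _ (S.max'_mem hS), fun m => ⟨fun hm => ?_, ?_⟩⟩
  · have hmS : m ∈ S := by simpa [S] using hm
    exact ⟨S.min'_le m hmS, S.le_max' m hmS⟩
  · rintro ⟨him, hmj⟩
    exact hs.out hmin hmax ⟨hf him, hf hmj⟩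

lemma Fin.sum_univ_succ_sub_castSucc {G : Type*} [AddCommGroup G] {n : ℕ}
    (f : Fin (n + 1) → G) :
    ∑ i : Fin n, (f i.succ - f i.castSucc) = f (Fin.last n) - f 0 := by
  induction n with
  | zero => simp
  | succ n ih =>
    rw [Fin.sum_univ_castSucc]
    simp only [Fin.succ_castSucc]
    rw [ih (fun i => f i.castSucc)]
    simp

namespace GPath

lemma length_eq_sum_manh {π : GPath}
    (hax : ∀ i : Fin π.k, axisAligned (π.pts i.castSucc) (π.pts i.succ)) :
    π.length = ∑ i : Fin π.k, manh (π.pts i.castSucc) (π.pts i.succ) :=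
  Finset.sum_congr rfl fun i _ => euclen_eq_manh_of_axisAligned (hax i)

lemma sum_manh_eq_of_monotone {π : GPath} (hmono : Monotone π.pts) :
    ∑ i : Fin π.k, manh (π.pts i.castSucc) (π.pts i.succ) =
      manh (π.pts 0) (π.pts (Fin.last π.k)) := by
  have hstep (i : Fin π.k) := (manh_eq_sub_coord_sum_iff _ _).2
    (hmono (Fin.castSucc_le_succ i))
  rw [Finset.sum_congr rfl fun i _ => hstep i,
    Fin.sum_univ_succ_sub_castSucc (fun n => (π.pts n).1 + (π.pts n).2),
    (manh_eq_sub_coord_sum_iff _ _).2 (hmono (Fin.zero_le _))]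

lemma isMPath_of_monotone {π : GPath}
    (hax : ∀ i : Fin π.k, axisAligned (π.pts i.castSucc) (π.pts i.succ))
    (hmono : Monotone π.pts) : IsMPath (π.pts 0) (π.pts (Fin.last π.k)) π :=
  ⟨rfl, rfl, hax, (length_eq_sum_manh hax).trans (sum_manh_eq_of_monotone hmono)⟩

end GPath

lemma IsMPath.monotone {s t : Point} {π : GPath} (h : IsMPath s t π) (hst : s ≤ t) :
    Monotone π.pts := by
  obtain ⟨h0, hlast, hax, hlen⟩ := h
  set coordSum : Point → ℝ := fun p => p.1 + p.2
  have hsum : ∑ i : Fin π.k, (coordSum (π.pts i.succ) - coordSum (π.pts i.castSucc)) =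
      ∑ i : Fin π.k, manh (π.pts i.castSucc) (π.pts i.succ) := by
    rw [Fin.sum_univ_succ_sub_castSucc (fun n => coordSum (π.pts n)),
      ← GPath.length_eq_sum_manh hax, hlen, h0, hlast, (manh_eq_sub_coord_sum_iff s t).2 hst]
  have hsteps := (Finset.sum_eq_sum_iff_of_le fun i _ => sub_coord_sum_le_manh _ _).1 hsum
  exact Fin.monotone_iff_le_succ.2 fun i =>
    (manh_eq_sub_coord_sum_iff _ _).1 (hsteps i (Finset.mem_univ i)).symm

namespace GPath

def slice (π : GPath) (i j : Fin (π.k + 1)) (hij : i ≤ j) : GPath where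
  k := j - i
  pts n := π.pts ⟨i + n, by have := n.isLt; have := j.isLt; omega⟩
  inj _ _ hab := Fin.ext (by simpa using congrArg Fin.val (π.inj hab))

variable {π : GPath} {i j : Fin (π.k + 1)} {hij : i ≤ j}

lemma slice_pts_zero : (π.slice i j hij).pts 0 = π.pts i := rfl

lemma slice_pts_last : (π.slice i j hij).pts (Fin.last _) = π.pts j :=
  congrArg π.pts (Fin.ext (by simp only [slice, Fin.val_last]; omega))

lemma slice_monotone (hmono : Monotone π.pts) : Monotone (π.slice i j hij).pts :=
  fun _ _ hab => hmono (Fin.mk_le_mk.2 (Nat.add_le_add_left hab i))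

lemma slice_step (n : Fin (π.slice i j hij).k) :
    ∃ m : Fin π.k, (m : ℕ) = i + n ∧
      (π.slice i j hij).pts n.castSucc = π.pts m.castSucc ∧
      (π.slice i j hij).pts n.succ = π.pts m.succ := by
  have hn : (n : ℕ) < j - i := n.isLt
  exact ⟨⟨i + n, by omega⟩, rfl, rfl,
    congrArg π.pts (Fin.ext (by simp only [Fin.val_succ]; rfl))⟩

lemma slice_axisAligned
    (hax : ∀ m : Fin π.k, axisAligned (π.pts m.castSucc) (π.pts m.succ))
    (n : Fin (π.slice i j hij).k) :
    axisAligned ((π.slice i j hij).pts n.castSucc) ((π.slice i j hij).pts n.succ) := by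
  obtain ⟨m, -, h1, h2⟩ := slice_step n
  rw [h1, h2]
  exact hax m

lemma isMPath_slice (hax : ∀ m : Fin π.k, axisAligned (π.pts m.castSucc) (π.pts m.succ))
    (hmono : Monotone π.pts) : IsMPath (π.pts i) (π.pts j) (π.slice i j hij) := by
  rw [← slice_pts_zero (hij := hij), ← slice_pts_last (hij := hij)]
  exact isMPath_of_monotone (slice_axisAligned hax) (slice_monotone hmono)

lemma mem_edges_slice {e : Sym2 Point} :
    e ∈ (π.slice i j hij).edges ↔
      ∃ m : Fin π.k, i ≤ m.castSucc ∧ m.succ ≤ j ∧ π.edge m = e := by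
  simp only [edges, edge, Finset.mem_image, Finset.mem_univ, true_and]
  constructor
  · rintro ⟨n, rfl⟩
    obtain ⟨m, hm, h1, h2⟩ := slice_step n
    have hn : (n : ℕ) < j - i := n.isLt
    refine ⟨m, ?_, ?_, by rw [h1, h2]⟩ <;> simp only [Fin.le_def, Fin.val_castSucc,
      Fin.val_succ] <;> omega
  · rintro ⟨m, him, hmj, rfl⟩
    rw [Fin.le_def, Fin.val_castSucc] at him
    rw [Fin.le_def, Fin.val_succ] at hmj
    have hn : (m : ℕ) - i < j - i := by omega
    refine ⟨⟨m - i, hn⟩, ?_⟩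
    obtain ⟨m', hm', h1, h2⟩ := slice_step (hij := hij) ⟨m - i, hn⟩
    obtain rfl : m' = m := Fin.ext (by simp only at hm'; omega)
    rw [h1, h2]

lemma edges_slice_eq_filter {Q : Point → Prop}
    (hQ : ∀ m, Q (π.pts m) ↔ i ≤ m ∧ m ≤ j) :
    (π.slice i j hij).edges = π.edges.filter fun e => ∀ z ∈ e, Q z := by
  ext e
  rw [mem_edges_slice]
  simp only [Finset.mem_filter, edges, edge, Finset.mem_image, Finset.mem_univ, true_and]
  constructor
  · rintro ⟨m, him, hmj, rfl⟩
    refine ⟨⟨m, rfl⟩, fun z hz => ?_⟩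
    rcases Sym2.mem_iff.1 hz with rfl | rfl
    · exact (hQ _).2 ⟨him, (Fin.castSucc_le_succ m).trans hmj⟩
    · exact (hQ _).2 ⟨him.trans (Fin.castSucc_le_succ m), hmj⟩
  · rintro ⟨⟨m, rfl⟩, hends⟩
    exact ⟨m, ((hQ _).1 (hends _ (Sym2.mem_mk_left _ _))).1,
      ((hQ _).1 (hends _ (Sym2.mem_mk_right _ _))).2, rfl⟩

end GPath

theorem in_out_pair_general (P : Inst) (r : Point × Point) (hreg : Regular r)
    (π : GPath) (hπ : InPi P r π) (l : Point × Point)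
    (hint : ∃ i : Fin (π.k + 1), inBox l.1 l.2 (π.pts i)) :
    ∃ i j : Fin (π.k + 1), i ≤ j ∧ π.pts i ≤ π.pts j ∧
      (∀ m : Fin (π.k + 1), inBox l.1 l.2 (π.pts m) ↔ i ≤ m ∧ m ≤ j) ∧
      ∃ π' : GPath, IsMPath (π.pts i) (π.pts j) π' ∧
        π'.edges = π.edges.filter fun e => ∀ z ∈ e, inBox l.1 l.2 z := by
  obtain ⟨hM, -⟩ := hπ
  have hmono : Monotone π.pts := hM.monotone hreg
  obtain ⟨i, j, hij, hbox⟩ := hmono.exists_forall_mem_iff_mem_Icc Set.ordConnected_Icc hint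
  exact ⟨i, j, hij, hmono hij, hbox, π.slice i j hij, GPath.isMPath_slice hM.2.2.1 hmono,
    GPath.edges_slice_eq_filter hbox⟩

/-- If an M-path `π ∈ Π_P(r)` for a regular pair `r ∈ P` intersects the bounding box `B(l)`,
then `π ∩ H(P, l)` is a subpath of `π` between vertices `p = π.pts i` and `q = π.pts j` with
`p ≤ q` (the in-out pair of `π` for `l`), and this subpath is an M-path for `(p, q)`. -/
theorem in_out_pair (P : Inst) (r : Point × Point) (hr : r ∈ P) (hreg : Regular r)
    (π : GPath) (hπ : InPi P r π) (l : Point × Point)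
    (hint : ∃ i : Fin (π.k + 1), inBox l.1 l.2 (π.pts i)) :
    ∃ i j : Fin (π.k + 1), i ≤ j ∧ π.pts i ≤ π.pts j ∧
      (∀ m : Fin (π.k + 1), inBox l.1 l.2 (π.pts m) ↔ i ≤ m ∧ m ≤ j) ∧
      ∃ π' : GPath, IsMPath (π.pts i) (π.pts j) π' ∧
        π'.edges = π.edges.filter fun e => ∀ z ∈ e, inBox l.1 l.2 z :=
  in_out_pair_general P r hreg π hπ l hint

end
end
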